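/- Define G'(C) = 2·(ln C − ln 2)/√(1−C²) + 2·artanh √(1−C²) + 2·C/√(1−C²) for C ∈ (0,1). Then G' is strictly increasing on (0,1), lim_{C→0⁺} G'(C) = 0, and lim_{C→1⁻} G'(C) = +∞. -/

import Mathlib

/-! With `s = √(1 - C²)` and `0 < C < 1` one has `artanh s = log ((1 + s) / C)`, and in this
form `G'` has derivative `2 (1 + C log (C / 2)) / s³`, which is positive because
`x log x ≥ -1/e > -1/2`. As `C → 0⁺` the only singular part is
`2 log C (1/s - 1) = 2 C² log C / (s (1 + s)) → 0`, while the remaining terms tend to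
`-2 log 2 + 2 log 2 = 0`. As `C → 1⁻`, `s → 0⁺`, the coefficient of `1/s` tends to
`2 - 2 log 2 > 0` and `artanh s → 0`. -/

open Filter

noncomputable def artanh (x : ℝ) : ℝ := Real.log ((1 + x) / (1 - x)) / 2

open Set Topology
open Real hiding artanh

lemma Real.neg_exp_neg_one_le_mul_log {x : ℝ} (hx : 0 < x) : -exp (-1) ≤ x * log x := by
  have := mul_exp_neg_le_exp_neg_one (-log x)
  rw [neg_neg, exp_log hx] at this
  linarith

lemma one_add_mul_log_half_pos {C : ℝ} (hC : 0 < C) : 0 < 1 + C * log (C / 2) := by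
  have hmin := neg_exp_neg_one_le_mul_log (half_pos hC)
  have hexp : exp (-1) < 1 / 2 := by
    rw [exp_neg, inv_lt_comm₀ (exp_pos 1) (by norm_num)]
    linarith [exp_one_gt_d9]
  nlinarith

lemma hasDerivAt_sqrt_one_sub_sq {x : ℝ} (hx : x ^ 2 < 1) :
    HasDerivAt (fun y => √(1 - y ^ 2)) (-x / √(1 - x ^ 2)) x := by
  have h := ((hasDerivAt_pow 2 x).const_sub 1).sqrt (by linarith)
  convert h using 1
  field_simp
  ring

lemma artanh_sqrt_one_sub_sq {x : ℝ} (hx₀ : 0 < x) (hx₁ : x ≤ 1) :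
    artanh √(1 - x ^ 2) = log (1 + √(1 - x ^ 2)) - log x := by
  set s := √(1 - x ^ 2)
  have hs : s ^ 2 = 1 - x ^ 2 := sq_sqrt (by nlinarith)
  have hs₀ : 0 ≤ s := sqrt_nonneg _
  have hs₁ : s < 1 := by nlinarith
  have hsq : (1 + s) / (1 - s) = ((1 + s) / x) ^ 2 := by
    rw [div_pow, div_eq_div_iff (by linarith) (by positivity)]
    linear_combination (1 + s) * hs
  rw [artanh, hsq, log_pow, log_div (by linarith) hx₀.ne']
  push_cast
  ring

noncomputable def gPrime (C : ℝ) : ℝ :=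
  2 * (log C - log 2) / √(1 - C ^ 2) + 2 * artanh √(1 - C ^ 2) + 2 * C / √(1 - C ^ 2)

noncomputable def gPrimeLog (C : ℝ) : ℝ :=
  2 * (log C - log 2 + C) / √(1 - C ^ 2) + 2 * (log (1 + √(1 - C ^ 2)) - log C)

lemma gPrime_eqOn_gPrimeLog : EqOn gPrime gPrimeLog (Ioo 0 1) := by
  intro C hC
  rw [gPrime, gPrimeLog, artanh_sqrt_one_sub_sq hC.1 hC.2.le]
  ring

lemma hasDerivAt_gPrimeLog {C : ℝ} (hC₀ : 0 < C) (hC₁ : C < 1) :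
    HasDerivAt gPrimeLog (2 * (1 + C * log (C / 2)) / √(1 - C ^ 2) ^ 3) C := by
  have hsqrt := hasDerivAt_sqrt_one_sub_sq (by nlinarith : C ^ 2 < 1)
  have hlog := hasDerivAt_log hC₀.ne'
  have hs₀ : 0 < √(1 - C ^ 2) := sqrt_pos.2 (by nlinarith)
  have h := ((((hlog.sub_const (log 2)).add (hasDerivAt_id C)).const_mul 2).div hsqrt hs₀.ne').add
    ((((hsqrt.const_add 1).log (by positivity)).sub hlog).const_mul 2)
  refine h.congr_deriv ?_
  have hs : √(1 - C ^ 2) ^ 2 = 1 - C ^ 2 := sq_sqrt (by nlinarith)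
  simp only [Pi.add_apply, id_eq]
  rw [log_div hC₀.ne' two_ne_zero]
  field_simp
  linear_combination (-√(1 - C ^ 2) ^ 2 + C * √(1 - C ^ 2) + C) * hs

theorem strictMonoOn_gPrime : StrictMonoOn gPrime (Ioo 0 1) := by
  refine StrictMonoOn.congr ?_ gPrime_eqOn_gPrimeLog.symm
  refine strictMonoOn_of_hasDerivWithinAt_pos (convex_Ioo 0 1)
    (f' := fun C => 2 * (1 + C * log (C / 2)) / √(1 - C ^ 2) ^ 3)
    (fun C hC => (hasDerivAt_gPrimeLog hC.1 hC.2).continuousAt.continuousWithinAt)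
    (fun C hC => ?_) (fun C hC => ?_) <;> rw [interior_Ioo] at hC
  · exact (hasDerivAt_gPrimeLog hC.1 hC.2).hasDerivWithinAt
  · have : 0 < √(1 - C ^ 2) := sqrt_pos.2 (by nlinarith [hC.1, hC.2])
    have := one_add_mul_log_half_pos hC.1
    positivity

lemma gPrimeLog_eq {C : ℝ} (hC : C ^ 2 < 1) :
    gPrimeLog C = C ^ 2 * log C * (2 / (√(1 - C ^ 2) * (1 + √(1 - C ^ 2)))) +
      (2 * (C - log 2) / √(1 - C ^ 2) + 2 * log (1 + √(1 - C ^ 2))) := by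
  have hs : √(1 - C ^ 2) ^ 2 = 1 - C ^ 2 := sq_sqrt (by linarith)
  have hs₀ : 0 < √(1 - C ^ 2) := sqrt_pos.2 (by linarith)
  rw [gPrimeLog]
  field_simp
  linear_combination -log C * hs

theorem tendsto_gPrime_nhdsGT_zero : Tendsto gPrime (𝓝[>] 0) (𝓝 0) := by
  have hlog : Tendsto (fun C : ℝ => C ^ 2 * log C) (𝓝[>] 0) (𝓝 0) := by
    simpa [rpow_two, mul_comm] using tendsto_log_mul_rpow_nhdsGT_zero two_pos
  have hfactor : ContinuousAt (fun C : ℝ => 2 / (√(1 - C ^ 2) * (1 + √(1 - C ^ 2)))) 0 := by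
    fun_prop (disch := norm_num)
  have hrest : ContinuousAt
      (fun C : ℝ => 2 * (C - log 2) / √(1 - C ^ 2) + 2 * log (1 + √(1 - C ^ 2))) 0 := by
    fun_prop (disch := norm_num)
  convert ((hlog.mul (hfactor.tendsto.mono_left nhdsWithin_le_nhds)).add
    (hrest.tendsto.mono_left nhdsWithin_le_nhds)).congr' ?_ using 2
  · norm_num
  · filter_upwards [Ioo_mem_nhdsGT one_pos] with C hC
    rw [gPrime_eqOn_gPrimeLog hC, gPrimeLog_eq (by nlinarith [hC.1, hC.2])]

lemma tendsto_sqrt_one_sub_sq_nhdsLT_one :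
    Tendsto (fun C : ℝ => √(1 - C ^ 2)) (𝓝[<] 1) (𝓝[>] 0) := by
  refine tendsto_nhdsWithin_iff.2 ⟨?_, ?_⟩
  · have h : ContinuousAt (fun C : ℝ => √(1 - C ^ 2)) 1 := by fun_prop
    simpa using h.tendsto.mono_left nhdsWithin_le_nhds
  · filter_upwards [Ioo_mem_nhdsLT (show (-1 : ℝ) < 1 by norm_num)] with C hC
    exact sqrt_pos.2 (by nlinarith [hC.1, hC.2])

theorem tendsto_gPrime_nhdsLT_one : Tendsto gPrime (𝓝[<] 1) atTop := by
  have hs := tendsto_sqrt_one_sub_sq_nhdsLT_one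
  have hnum :
      Tendsto (fun C : ℝ => 2 * (log C - log 2) + 2 * C) (𝓝[<] 1) (𝓝 (2 - 2 * log 2)) := by
    have h : ContinuousAt (fun C : ℝ => 2 * (log C - log 2) + 2 * C) 1 := by
      fun_prop (disch := norm_num)
    convert h.tendsto.mono_left nhdsWithin_le_nhds using 2
    rw [log_one]
    ring
  have hartanh : ContinuousAt artanh 0 := by
    unfold artanh
    fun_prop (disch := norm_num)
  have hart : Tendsto (fun C : ℝ => 2 * artanh √(1 - C ^ 2)) (𝓝[<] 1) (𝓝 0) := by
    simpa [artanh] using (hartanh.tendsto.comp (hs.mono_right nhdsWithin_le_nhds)).const_mul 2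
  have h := (hnum.pos_mul_atTop (by linarith [log_two_lt_d9]) hs.inv_tendsto_nhdsGT_zero).atTop_add
    hart
  refine h.congr fun C => ?_
  simp only [gPrime, Pi.inv_apply]
  ring

theorem Gprime_properties (G' : ℝ → ℝ)
    (hG' : ∀ C, G' C = 2 * (Real.log C - Real.log 2) / Real.sqrt (1 - C ^ 2) +
      2 * artanh (Real.sqrt (1 - C ^ 2)) + 2 * C / Real.sqrt (1 - C ^ 2)) :
    StrictMonoOn G' (Set.Ioo 0 1) ∧
    Tendsto G' (nhdsWithin 0 (Set.Ioi 0)) (nhds 0) ∧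
    Tendsto G' (nhdsWithin 1 (Set.Iio 1)) atTop := by
  obtain rfl : G' = gPrime := funext hG'
  exact ⟨strictMonoOn_gPrime, tendsto_gPrime_nhdsGT_zero, tendsto_gPrime_nhdsLT_one⟩
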